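/- arXiv:1901.11091 — 5 statements merged into one kernel-verified Lean document; each statement's English description precedes it below -/
import Mathlib

section
/- For every b, for all real x, the limit as a → ∞ (through positive reals) of Γ(a+b)/(a^b · Γ(a)) equals 1. -/
/-!
Wendel's argument. By log-convexity of `Γ`, for `0 ≤ s ≤ 1` and `a > 0`,
`Γ(a + s) ≤ a ^ s Γ(a)` (interpolate between `a` and `a + 1`) and
`a Γ(a) = Γ(a + 1) ≤ (a + s) ^ (1 - s) Γ(a + s)` (interpolate between `a + s` and `a + s + 1`),
so the ratio is squeezed between `(a / (a + s)) ^ (1 - s)` and `1`. By the functional equation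
`Γ(x + 1) = x Γ(x)` the ratio for `b + 1` is that for `b` times `(a + b) / a → 1`, which
reduces an arbitrary `b` to its fractional part.
-/

open Filter Real Set

noncomputable def gammaRatio (b a : ℝ) : ℝ := Gamma (a + b) / (a ^ b * Gamma a)

namespace Real

theorem Gamma_le_rpow_mul_rpow {x y s t : ℝ} (hx : 0 < x) (hy : 0 < y) (hs : 0 ≤ s)
    (ht : 0 ≤ t) (hst : s + t = 1) : Gamma (s * x + t * y) ≤ Gamma x ^ s * Gamma y ^ t := by
  have hxy : 0 < s * x + t * y := by
    simpa only [smul_eq_mul, mem_Ioi] using convex_Ioi (0 : ℝ) hx hy hs ht hst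
  have hlog := convexOn_log_Gamma.2 (mem_Ioi.2 hx) (mem_Ioi.2 hy) hs ht hst
  simp only [smul_eq_mul, Function.comp_apply] at hlog
  rw [rpow_def_of_pos (Gamma_pos_of_pos hx), rpow_def_of_pos (Gamma_pos_of_pos hy), ← exp_add,
    ← exp_log (Gamma_pos_of_pos hxy), exp_le_exp]
  linarith

theorem Gamma_add_le_rpow_mul_Gamma {x s : ℝ} (hx : 0 < x) (hs₀ : 0 ≤ s) (hs₁ : s ≤ 1) :
    Gamma (x + s) ≤ x ^ s * Gamma x :=
  calc Gamma (x + s) = Gamma ((1 - s) * x + s * (x + 1)) := by ring_nf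
    _ ≤ Gamma x ^ (1 - s) * Gamma (x + 1) ^ s :=
      Gamma_le_rpow_mul_rpow hx (by linarith) (by linarith) hs₀ (by ring)
    _ = x ^ s * Gamma x := by
      rw [Gamma_add_one hx.ne', mul_rpow hx.le (Gamma_pos_of_pos hx).le, mul_left_comm,
        ← rpow_add (Gamma_pos_of_pos hx), sub_add_cancel, rpow_one]

theorem mul_Gamma_le_rpow_mul_Gamma_add {x s : ℝ} (hx : 0 < x) (hs₀ : 0 ≤ s) (hs₁ : s ≤ 1) :
    x * Gamma x ≤ (x + s) ^ (1 - s) * Gamma (x + s) := by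
  have hxs : 0 < x + s := by linarith
  calc x * Gamma x = Gamma (s * (x + s) + (1 - s) * (x + s + 1)) := by
        rw [← Gamma_add_one hx.ne']; ring_nf
    _ ≤ Gamma (x + s) ^ s * Gamma (x + s + 1) ^ (1 - s) :=
      Gamma_le_rpow_mul_rpow hxs (by linarith) hs₀ (by linarith) (by ring)
    _ = (x + s) ^ (1 - s) * Gamma (x + s) := by
      rw [Gamma_add_one hxs.ne', mul_rpow hxs.le (Gamma_pos_of_pos hxs).le, mul_left_comm,
        ← rpow_add (Gamma_pos_of_pos hxs), add_sub_cancel, rpow_one]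

end Real

theorem gammaRatio_le_one {s a : ℝ} (ha : 0 < a) (hs₀ : 0 ≤ s) (hs₁ : s ≤ 1) :
    gammaRatio s a ≤ 1 := by
  rw [gammaRatio, div_le_one (by have := Gamma_pos_of_pos ha; positivity)]
  exact Gamma_add_le_rpow_mul_Gamma ha hs₀ hs₁

theorem div_add_rpow_le_gammaRatio {s a : ℝ} (ha : 0 < a) (hs₀ : 0 ≤ s) (hs₁ : s ≤ 1) :
    (a / (a + s)) ^ (1 - s) ≤ gammaRatio s a := by
  have hΓ := Gamma_pos_of_pos ha
  have has : 0 < a + s := by linarith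
  rw [gammaRatio, div_rpow ha.le has.le, div_le_div_iff₀ (by positivity) (by positivity),
    ← mul_assoc, ← rpow_add ha, sub_add_cancel, rpow_one, mul_comm (Gamma (a + s))]
  exact mul_Gamma_le_rpow_mul_Gamma_add ha hs₀ hs₁

theorem tendsto_add_const_div_self_atTop (b : ℝ) :
    Tendsto (fun a : ℝ => (a + b) / a) atTop (nhds 1) := by
  have : Tendsto (fun a : ℝ => 1 + b / a) atTop (nhds (1 + 0)) :=
    tendsto_const_nhds.add (tendsto_const_nhds.div_atTop tendsto_id)
  rw [add_zero] at this
  refine this.congr' ?_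
  filter_upwards [eventually_gt_atTop 0] with a ha
  rw [add_div, div_self ha.ne']

theorem tendsto_gammaRatio_of_mem_Icc {s : ℝ} (hs₀ : 0 ≤ s) (hs₁ : s ≤ 1) :
    Tendsto (gammaRatio s) atTop (nhds 1) := by
  have hlower : Tendsto (fun a : ℝ => (a / (a + s)) ^ (1 - s)) atTop (nhds 1) := by
    have := ((tendsto_add_const_div_self_atTop s).inv₀ one_ne_zero).rpow_const
      (p := 1 - s) (Or.inl (by norm_num))
    simpa only [inv_div, inv_one, one_rpow] using this
  refine tendsto_of_tendsto_of_tendsto_of_le_of_le' hlower tendsto_const_nhds ?_ ?_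
  · filter_upwards [eventually_gt_atTop 0] with a ha
    exact div_add_rpow_le_gammaRatio ha hs₀ hs₁
  · filter_upwards [eventually_gt_atTop 0] with a ha
    exact gammaRatio_le_one ha hs₀ hs₁

theorem gammaRatio_add_one {b a : ℝ} (ha : 0 < a) (hab : 0 < a + b) :
    gammaRatio (b + 1) a = (a + b) / a * gammaRatio b a := by
  have hΓa := Gamma_pos_of_pos ha
  have hΓab := Gamma_pos_of_pos hab
  rw [gammaRatio, gammaRatio, ← add_assoc, Gamma_add_one hab.ne', rpow_add_one ha.ne']
  field_simp

theorem tendsto_gammaRatio_add_one_iff (b : ℝ) :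
    Tendsto (gammaRatio (b + 1)) atTop (nhds 1) ↔ Tendsto (gammaRatio b) atTop (nhds 1) := by
  have hshift : gammaRatio (b + 1) =ᶠ[atTop] fun a => (a + b) / a * gammaRatio b a := by
    filter_upwards [eventually_gt_atTop 0, eventually_gt_atTop (-b)] with a ha hab
    exact gammaRatio_add_one ha (by linarith)
  have hfactor := tendsto_add_const_div_self_atTop b
  rw [tendsto_congr' hshift]
  constructor
  · intro h
    have := h.div hfactor one_ne_zero
    rw [div_one] at this
    refine this.congr' ?_
    filter_upwards [eventually_gt_atTop 0, eventually_gt_atTop (-b)] with a ha hab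
    exact mul_div_cancel_left₀ _ (div_pos (by linarith) ha).ne'
  · simpa only [one_mul] using hfactor.mul

theorem tendsto_gammaRatio_add_intCast_iff (b : ℝ) (n : ℤ) :
    Tendsto (gammaRatio (b + n)) atTop (nhds 1) ↔ Tendsto (gammaRatio b) atTop (nhds 1) := by
  induction n using Int.induction_on with
  | zero => simp
  | succ k ih => rw [Int.cast_add, Int.cast_one, ← add_assoc, tendsto_gammaRatio_add_one_iff, ih]
  | pred k ih =>
    have hshift : b + ((-k - 1 : ℤ) : ℝ) + 1 = b + ((-k : ℤ) : ℝ) := by push_cast; ring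
    rw [← ih, ← hshift, tendsto_gammaRatio_add_one_iff]

theorem gamma_ratio_tendsto_one (b : ℝ) :
    Tendsto (fun a : ℝ => Real.Gamma (a + b) / (a ^ b * Real.Gamma a)) atTop (nhds 1) := by
  have h := (tendsto_gammaRatio_add_intCast_iff (Int.fract b) ⌊b⌋).2
    (tendsto_gammaRatio_of_mem_Icc (Int.fract_nonneg b) (Int.fract_lt_one b).le)
  rwa [Int.fract_add_floor] at h
end

section
/- As the shadowing parameter ms → ∞, the Fisher-Snedecor F density converges pointwise to the Gamma (Nakagami-m power) density: for fixed m > 0, γ̄ > 0 and γ > 0, lim_{ms → ∞} m^m (ms·γ̄)^{ms} γ^{m-1} / (B(m, ms)·(mγ + ms·γ̄)^{m+ms}) = (m/γ̄)^m γ^{m-1} e^{−mγ/γ̄} / Γ(m). -/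
/-!
Log-convexity of `Γ` squeezes `Γ (x + a) / Γ x` between `(x - 1) ^ a` and `(x + a) ^ a`, so
`Γ (x + a) ~ Γ x * x ^ a`. Writing `m γ + ms γ̄ = ms γ̄ (1 + c / ms)` with `c = m γ / γ̄`, the Fisher
density becomes the Gamma density's prefactor times `Γ (ms + m) / (Γ ms * ms ^ m) → 1`, divided by
`(1 + c / ms) ^ (ms + m) → e ^ c`.
-/

open Filter Real

namespace Real

lemma log_Gamma_add_one_sub_log_Gamma {y : ℝ} (hy : 0 < y) :
    log (Gamma (y + 1)) - log (Gamma y) = log y := by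
  rw [Gamma_add_one hy.ne', log_mul hy.ne' (Gamma_pos_of_pos hy).ne', add_sub_cancel_right]

lemma Gamma_add_div_Gamma_le_rpow {x a : ℝ} (hx : 0 < x) (ha : 0 < a) :
    Gamma (x + a) / Gamma x ≤ (x + a) ^ a := by
  have hxa : 0 < x + a := by linarith
  have hslope := convexOn_log_Gamma.slope_mono_adjacent (x := x) (y := x + a) (z := x + a + 1)
    hx (show 0 < x + a + 1 by linarith) (by linarith) (by linarith)
  simp only [Function.comp_apply] at hslope
  rw [add_sub_cancel_left, add_sub_cancel_left, div_one, log_Gamma_add_one_sub_log_Gamma hxa,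
    div_le_iff₀ ha] at hslope
  rw [le_rpow_iff_log_le (div_pos (Gamma_pos_of_pos hxa) (Gamma_pos_of_pos hx)) hxa,
    log_div (Gamma_pos_of_pos hxa).ne' (Gamma_pos_of_pos hx).ne']
  linarith

lemma rpow_le_Gamma_add_div_Gamma {x a : ℝ} (hx : 1 < x) (ha : 0 < a) :
    (x - 1) ^ a ≤ Gamma (x + a) / Gamma x := by
  have hx1 : 0 < x - 1 := by linarith
  have hx0 : 0 < x := by linarith
  have hxa : 0 < x + a := by linarith
  have hslope := convexOn_log_Gamma.slope_mono_adjacent (x := x - 1) (y := x) (z := x + a)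
    hx1 hxa (by linarith) (by linarith)
  have hlog := log_Gamma_add_one_sub_log_Gamma hx1
  rw [sub_add_cancel] at hlog
  simp only [Function.comp_apply] at hslope
  rw [sub_sub_cancel, div_one, add_sub_cancel_left, hlog, le_div_iff₀ ha] at hslope
  rw [rpow_le_iff_le_log hx1 (div_pos (Gamma_pos_of_pos hxa) (Gamma_pos_of_pos hx0)),
    log_div (Gamma_pos_of_pos hxa).ne' (Gamma_pos_of_pos hx0).ne']
  linarith

end Real

lemma tendsto_one_add_div_rpow_const (c a : ℝ) :
    Tendsto (fun x : ℝ => (1 + c / x) ^ a) atTop (nhds 1) := by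
  have h : Tendsto (fun x : ℝ => 1 + c / x) atTop (nhds 1) := by
    simpa using (tendsto_const_nhds (x := (1 : ℝ))).add
      ((tendsto_const_nhds (x := c)).div_atTop tendsto_id)
  simpa using h.rpow_const (Or.inl one_ne_zero)

lemma tendsto_one_add_div_rpow_add (c a : ℝ) :
    Tendsto (fun x : ℝ => (1 + c / x) ^ (x + a)) atTop (nhds (exp c)) := by
  have h := (tendsto_one_add_div_rpow_exp c).mul (tendsto_one_add_div_rpow_const c a)
  rw [mul_one] at h
  refine h.congr' ?_
  filter_upwards [eventually_gt_atTop |c|] with x hx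
  have hx0 : 0 < x := (abs_nonneg c).trans_lt hx
  have hpos : 0 < 1 + c / x := by
    rw [one_add_div hx0.ne']
    exact div_pos (by linarith [neg_abs_le c]) hx0
  rw [rpow_add hpos]

lemma tendsto_Gamma_add_div_Gamma_mul_rpow {a : ℝ} (ha : 0 < a) :
    Tendsto (fun x : ℝ => Gamma (x + a) / (Gamma x * x ^ a)) atTop (nhds 1) := by
  refine tendsto_of_tendsto_of_tendsto_of_le_of_le' (tendsto_one_add_div_rpow_const (-1) a)
    (tendsto_one_add_div_rpow_const a a) ?_ ?_
  · filter_upwards [eventually_gt_atTop 1] with x hx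
    have hx0 : 0 < x := by linarith
    rw [← div_div, le_div_iff₀ (rpow_pos_of_pos hx0 a), ← mul_rpow (by field_simp; linarith) hx0.le,
      show (1 + -1 / x) * x = x - 1 by field_simp; ring]
    exact rpow_le_Gamma_add_div_Gamma hx ha
  · filter_upwards [eventually_gt_atTop 0] with x hx
    rw [← div_div, div_le_iff₀ (rpow_pos_of_pos hx a), ← mul_rpow (by positivity) hx.le,
      show (1 + a / x) * x = x + a by field_simp]
    exact Gamma_add_div_Gamma_le_rpow hx ha

lemma fisher_pdf_eq_mul_Gamma_ratio_div {m g γ x : ℝ} (hm : 0 < m) (hg : 0 < g) (hx : 0 < x)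
    (hpos : 0 < m * γ + x * g) :
    m ^ m * (x * g) ^ x * γ ^ (m - 1) /
        ((Gamma m * Gamma x / Gamma (m + x)) * (m * γ + x * g) ^ (m + x)) =
      (m / g) ^ m * γ ^ (m - 1) / Gamma m * (Gamma (x + m) / (Gamma x * x ^ m)) /
        (1 + m * γ / g / x) ^ (x + m) := by
  have hxg : 0 < x * g := by positivity
  have hfactor : m * γ + x * g = x * g * (1 + m * γ / g / x) := by
    field_simp
    ring
  have hq : 0 < 1 + m * γ / g / x := pos_of_mul_pos_right (hfactor ▸ hpos) hxg.le
  have hsplit : (m * γ + x * g) ^ (m + x) =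
      (x * g) ^ x * x ^ m * g ^ m * (1 + m * γ / g / x) ^ (x + m) := by
    rw [hfactor, mul_rpow hxg.le hq.le, add_comm m x, rpow_add hxg, mul_rpow hx.le hg.le (z := m)]
    ring
  rw [hsplit, div_rpow hm.le hg.le, add_comm m x]
  have := (Gamma_pos_of_pos hm).ne'
  have := (Gamma_pos_of_pos hx).ne'
  have := (Gamma_pos_of_pos (add_pos hx hm)).ne'
  field_simp

theorem fisher_pdf_tendsto_gamma_density (m g γ : ℝ) (hm : 0 < m) (hg : 0 < g) (hγ : 0 < γ) :
    Tendsto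
      (fun ms : ℝ =>
        m ^ m * (ms * g) ^ ms * γ ^ (m - 1) /
          ((Real.Gamma m * Real.Gamma ms / Real.Gamma (m + ms)) *
            (m * γ + ms * g) ^ (m + ms)))
      atTop
      (nhds ((m / g) ^ m * γ ^ (m - 1) * Real.exp (-(m * γ) / g) / Real.Gamma m)) := by
  have hval : (m / g) ^ m * γ ^ (m - 1) * exp (-(m * γ) / g) / Gamma m =
      (m / g) ^ m * γ ^ (m - 1) / Gamma m * 1 / exp (m * γ / g) := by
    rw [neg_div, exp_neg]
    ring
  rw [hval]
  refine (((tendsto_const_nhds).mul (tendsto_Gamma_add_div_Gamma_mul_rpow hm)).div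
    (tendsto_one_add_div_rpow_add (m * γ / g) m) (exp_pos _).ne').congr' ?_
  filter_upwards [eventually_gt_atTop 0] with x hx
  exact (fisher_pdf_eq_mul_Gamma_ratio_div hm hg hx (by positivity)).symm
end

section
/- The asymptotic (small-threshold) behavior of the Fisher-Snedecor F CDF: for m, ms, γ̄ > 0, the CDF F(x) = ∫₀^x m^m (ms γ̄)^{ms} γ^{m−1}/(B(m,ms)(mγ + ms γ̄)^{m+ms}) dγ satisfies F(x) = (Γ(m+ms)/(Γ(ms)Γ(m+1)))·(m/(ms γ̄))^m · x^m · (1 + o(1)) as x → 0⁺; i.e., lim_{x→0⁺} F(x)/x^m = (Γ(m+ms)/(Γ(ms)Γ(m+1)))(m/(ms γ̄))^m. -/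
open MeasureTheory Real Set Filter
open scoped Topology

/-!
The density is `γ ^ (m - 1) * f γ` with `f γ = c / (m γ + ms ḡ) ^ (m + ms)` continuous at `0`.
Near `0` the CDF therefore behaves like `f 0 * ∫₀ˣ γ ^ (m - 1) dγ = f 0 * x ^ m / m`, and
`Γ(m + 1) = m Γ(m)` turns `f 0 / m` into the stated constant.
-/

section RpowWeight

variable {a x : ℝ}

theorem integrableOn_rpow_sub_one_Ioc (ha : 0 < a) :
    IntegrableOn (fun γ : ℝ => γ ^ (a - 1)) (Ioc 0 x) :=
  (intervalIntegral.intervalIntegrable_rpow' (by linarith)).1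

theorem setIntegral_rpow_sub_one_Ioc (ha : 0 < a) (hx : 0 ≤ x) :
    ∫ γ in Ioc 0 x, γ ^ (a - 1) = x ^ a / a := by
  rw [← intervalIntegral.integral_of_le hx, integral_rpow (Or.inl (by linarith)),
    sub_add_cancel, zero_rpow ha.ne', sub_zero]

theorem integrableOn_rpow_sub_one_mul_Ioc {f : ℝ → ℝ} (ha : 0 < a) (hx : 0 ≤ x)
    (hf : ContinuousOn f (Icc 0 x)) :
    IntegrableOn (fun γ => γ ^ (a - 1) * f γ) (Ioc 0 x) :=
  ((intervalIntegral.intervalIntegrable_rpow' (by linarith)).mul_continuousOn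
    (by rwa [uIcc_of_le hx])).1

theorem abs_setIntegral_rpow_sub_one_mul_sub_le {f : ℝ → ℝ} {η : ℝ} (ha : 0 < a) (hx : 0 ≤ x)
    (hf : IntegrableOn (fun γ => γ ^ (a - 1) * f γ) (Ioc 0 x))
    (hη : ∀ γ ∈ Ioc 0 x, |f γ - f 0| ≤ η) :
    |(∫ γ in Ioc 0 x, γ ^ (a - 1) * f γ) - f 0 * (x ^ a / a)| ≤ η * (x ^ a / a) := by
  have hw := integrableOn_rpow_sub_one_Ioc (x := x) ha
  have hg : IntegrableOn (fun γ => γ ^ (a - 1) * (f γ - f 0)) (Ioc 0 x) := by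
    simpa only [mul_sub, Pi.sub_def] using hf.sub (hw.mul_const (f 0))
  have hsub : (∫ γ in Ioc 0 x, γ ^ (a - 1) * f γ) - f 0 * (x ^ a / a)
      = ∫ γ in Ioc 0 x, γ ^ (a - 1) * (f γ - f 0) := by
    simp_rw [mul_sub]
    rw [integral_sub hf (hw.mul_const _), integral_mul_const, setIntegral_rpow_sub_one_Ioc ha hx,
      mul_comm]
  rw [hsub, ← setIntegral_rpow_sub_one_Ioc ha hx, ← integral_const_mul]
  refine abs_integral_le_integral_abs.trans (setIntegral_mono_on hg.abs (hw.const_mul _)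
    measurableSet_Ioc fun γ hγ => ?_)
  rw [abs_mul, abs_of_nonneg (rpow_nonneg hγ.1.le _), mul_comm η]
  exact mul_le_mul_of_nonneg_left (hη γ hγ) (rpow_nonneg hγ.1.le _)

theorem tendsto_setIntegral_rpow_sub_one_mul_div_rpow {f : ℝ → ℝ} (ha : 0 < a)
    (hf : ContinuousOn f (Ici 0)) :
    Tendsto (fun x => (∫ γ in Ioc 0 x, γ ^ (a - 1) * f γ) / x ^ a) (𝓝[>] 0) (𝓝 (f 0 / a)) := by
  rw [Metric.tendsto_nhdsWithin_nhds]
  intro ε hε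
  obtain ⟨δ, hδ, hfδ⟩ :=
    Metric.continuousWithinAt_iff.1 (hf 0 self_mem_Ici) (ε * a / 2) (by positivity)
  refine ⟨δ, hδ, fun x (hx : 0 < x) hxδ => ?_⟩
  have hxa : 0 < x ^ a := rpow_pos_of_pos hx a
  have hclose : ∀ γ ∈ Ioc 0 x, |f γ - f 0| ≤ ε * a / 2 := fun γ hγ =>
    (hfδ hγ.1.le (by
      rw [Real.dist_eq, sub_zero, abs_of_pos hγ.1]
      exact hγ.2.trans_lt ((le_abs_self x).trans_lt (by simpa using hxδ)))).le
  have hbound := abs_setIntegral_rpow_sub_one_mul_sub_le ha hx.le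
    (integrableOn_rpow_sub_one_mul_Ioc ha hx.le (hf.mono Icc_subset_Ici_self)) hclose
  set I := ∫ γ in Ioc 0 x, γ ^ (a - 1) * f γ
  calc dist (I / x ^ a) (f 0 / a) = |I - f 0 * (x ^ a / a)| / x ^ a := by
        rw [Real.dist_eq, ← abs_of_pos hxa, ← abs_div, abs_of_pos hxa]
        congr 1
        field_simp
    _ ≤ ε * a / 2 * (x ^ a / a) / x ^ a := by gcongr
    _ = ε / 2 := by field_simp
    _ < ε := half_lt_self hε

end RpowWeight

theorem fisher_cdf_asymptotics (m ms g : ℝ) (hm : 0 < m) (hms : 0 < ms) (hg : 0 < g) :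
    Tendsto
      (fun x : ℝ =>
        (∫ γ in Ioc (0:ℝ) x,
          m ^ m * (ms * g) ^ ms /
            (Real.Gamma m * Real.Gamma ms / Real.Gamma (m + ms)) *
            γ ^ (m - 1) / (m * γ + ms * g) ^ (m + ms)) / x ^ m)
      (nhdsWithin 0 (Ioi 0))
      (nhds (Real.Gamma (m + ms) / (Real.Gamma ms * Real.Gamma (m + 1)) *
        (m / (ms * g)) ^ m)) := by
  set c := m ^ m * (ms * g) ^ ms / (Real.Gamma m * Real.Gamma ms / Real.Gamma (m + ms)) with hc
  have hmsg : 0 < ms * g := mul_pos hms hg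
  have hf : ContinuousOn (fun γ : ℝ => c / (m * γ + ms * g) ^ (m + ms)) (Ici 0) :=
    continuousOn_const.div
      (Continuous.continuousOn (by fun_prop (disch := positivity))) fun γ (hγ : 0 ≤ γ) =>
      (rpow_pos_of_pos (by positivity) _).ne'
  have hconst : c / (m * 0 + ms * g) ^ (m + ms) / m
      = Real.Gamma (m + ms) / (Real.Gamma ms * Real.Gamma (m + 1)) * (m / (ms * g)) ^ m := by
    have := (Real.Gamma_pos_of_pos hm).ne'
    have := (Real.Gamma_pos_of_pos hms).ne'
    have := (Real.Gamma_pos_of_pos (add_pos hm hms)).ne'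
    have := (rpow_pos_of_pos hmsg m).ne'
    have := (rpow_pos_of_pos hmsg ms).ne'
    rw [hc, mul_zero, zero_add, Real.Gamma_add_one hm.ne', rpow_add hmsg, div_rpow hm.le hmsg.le]
    field_simp
  rw [← hconst]
  convert tendsto_setIntegral_rpow_sub_one_mul_div_rpow hm hf using 5 with x γ
  ring
end

section
/- Craig's formula: for all x ≥ 0, Q(x) = (1/π) ∫₀^{π/2} exp(−x²/(2 sin²φ)) dφ, where Q(x) = (1/√(2π)) ∫_x^∞ e^{−u²/2} du. -/
open MeasureTheory Real Set

/-- The Gaussian Q-function. -/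
noncomputable def gaussQ (x : ℝ) : ℝ :=
  (1 / Real.sqrt (2 * Real.pi)) * ∫ u in Ioi x, Real.exp (-u ^ 2 / 2)

/-!
Multiplying `∫_{u > x} e^{-u²/2}` by `∫_{v > 0} e^{-v²/2} = √(π/2)` gives the Gaussian integral
over the quadrant `{u > x, v > 0}`. For `x ≥ 0` this quadrant is, in polar coordinates,
`{0 < θ < π/2, r cos θ > x}`, and the radial integral `∫_{r > x / cos θ} r e^{-r²/2} dr` equals
`e^{-x²/(2 cos² θ)}`. The reflection `θ ↦ π/2 - θ` turns `cos` into `sin`, and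
`√(2π) · √(π/2) = π` accounts for the constant.
-/

lemma integrable_mul_exp_neg_sq_div_two : Integrable fun r : ℝ => r * exp (-r ^ 2 / 2) := by
  convert integrable_mul_exp_neg_mul_sq (b := 1 / 2) (by norm_num) using 4
  ring

lemma integral_Ioi_mul_exp_neg_sq_div_two (a : ℝ) :
    ∫ r in Ioi a, r * exp (-r ^ 2 / 2) = exp (-a ^ 2 / 2) := by
  have hderiv (r : ℝ) : HasDerivAt (fun r => -exp (-r ^ 2 / 2)) (r * exp (-r ^ 2 / 2)) r :=
    ((hasDerivAt_pow 2 r).neg.div_const 2).exp.neg.congr_deriv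
      (by simp only [Pi.neg_apply]; push_cast; ring)
  have hlim : Filter.Tendsto (fun r : ℝ => -exp (-r ^ 2 / 2)) Filter.atTop (nhds (-0)) :=
    (tendsto_exp_atBot.comp <| (Filter.tendsto_neg_atTop_atBot.comp <|
      Filter.tendsto_pow_atTop two_ne_zero).atBot_div_const two_pos).neg
  rw [integral_Ioi_of_hasDerivAt_of_tendsto' (fun r _ => hderiv r)
    integrable_mul_exp_neg_sq_div_two.integrableOn hlim]
  simp

lemma integral_Ioi_zero_exp_neg_sq_div_two : ∫ v in Ioi (0 : ℝ), exp (-v ^ 2 / 2) = √(π / 2) := by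
  convert integral_gaussian_Ioi (1 / 2) using 1
  · congr with v
    ring_nf
  · rw [eq_div_iff two_ne_zero, show (2 : ℝ) = √(2 ^ 2) by simp, ← sqrt_mul (by positivity)]
    ring_nf

def polarShiftedQuadrant (x : ℝ) : Set (ℝ × ℝ) :=
  {p | p.2 ∈ Ioo 0 (π / 2) ∧ x < p.1 * cos p.2}

lemma polarCoord_target_inter_preimage_Ioi_prod_Ioi {x : ℝ} (hx : 0 ≤ x) :
    polarCoord.target ∩ polarCoord.symm ⁻¹' (Ioi x ×ˢ Ioi 0) = polarShiftedQuadrant x := by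
  ext ⟨r, θ⟩
  simp only [polarShiftedQuadrant, polarCoord_target, polarCoord_symm_apply, mem_inter_iff,
    mem_prod, mem_preimage, mem_Ioi, mem_Ioo, mem_ofPred_eq]
  constructor
  · rintro ⟨⟨hr, hθ₁, hθ₂⟩, hu, hv⟩
    have hsin : 0 < sin θ := pos_of_mul_pos_right hv hr.le
    have hcos : 0 < cos θ := pos_of_mul_pos_right (hx.trans_lt hu) hr.le
    refine ⟨⟨?_, ?_⟩, hu⟩
    · by_contra! h
      exact hsin.not_ge (sin_nonpos_of_nonpos_of_neg_pi_le h hθ₁.le)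
    · by_contra! h
      exact hcos.not_ge (cos_nonpos_of_pi_div_two_le_of_le h (by linarith))
  · rintro ⟨⟨hθ₁, hθ₂⟩, hu⟩
    have hcos : 0 < cos θ := cos_pos_of_mem_Ioo ⟨by linarith, hθ₂⟩
    have hr : 0 < r := pos_of_mul_pos_left (hx.trans_lt hu) hcos.le
    exact ⟨⟨hr, by linarith, by linarith⟩, hu,
      mul_pos hr (sin_pos_of_pos_of_lt_pi hθ₁ (by linarith))⟩

lemma setIntegral_Ioi_prod_Ioi_eq_polarShiftedQuadrant {E : Type*} [NormedAddCommGroup E]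
    [NormedSpace ℝ E] {x : ℝ} (hx : 0 ≤ x) (f : ℝ × ℝ → E) :
    ∫ z in Ioi x ×ˢ Ioi 0, f z = ∫ p in polarShiftedQuadrant x, p.1 • f (polarCoord.symm p) := by
  have hS : MeasurableSet (Ioi x ×ˢ Ioi (0 : ℝ)) := measurableSet_Ioi.prod measurableSet_Ioi
  rw [← integral_indicator hS, ← integral_comp_polarCoord_symm,
    ← polarCoord_target_inter_preimage_Ioi_prod_Ioi hx,
    ← setIntegral_indicator (continuous_polarCoord_symm.measurable hS)]
  classical
  congr with p
  rw [indicator_apply, indicator_apply, mem_preimage]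
  split_ifs <;> simp

lemma setIntegral_polarShiftedQuadrant {E : Type*} [NormedAddCommGroup E] [NormedSpace ℝ E]
    {g : ℝ → E} (hg : Integrable g) (x : ℝ) :
    ∫ p in polarShiftedQuadrant x, g p.1 = ∫ θ in Ioo 0 (π / 2), ∫ r in Ioi (x / cos θ), g r := by
  have hmeas : MeasurableSet (polarShiftedQuadrant x) :=
    (measurableSet_Ioo.preimage measurable_snd).inter
      (measurableSet_lt measurable_const (measurable_fst.mul (measurable_cos.comp measurable_snd)))
  have hrect : IntegrableOn (fun p : ℝ × ℝ => g p.1) (univ ×ˢ Ioo 0 (π / 2)) := by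
    unfold IntegrableOn
    rw [Measure.volume_eq_prod, ← Measure.prod_restrict, Measure.restrict_univ]
    exact hg.comp_fst _
  have hint : Integrable ((polarShiftedQuadrant x).indicator fun p => g p.1)
      (volume.prod volume) := by
    rw [integrable_indicator_iff hmeas, ← Measure.volume_eq_prod]
    exact hrect.mono_set fun p hp => ⟨trivial, hp.1⟩
  rw [← integral_indicator hmeas, Measure.volume_eq_prod, integral_prod_symm _ hint,
    ← integral_indicator measurableSet_Ioo]
  congr with θ
  by_cases hθ : θ ∈ Ioo 0 (π / 2)
  · have hcos : 0 < cos θ := cos_pos_of_mem_Ioo ⟨by linarith [hθ.1, pi_pos], hθ.2⟩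
    rw [indicator_of_mem hθ, ← integral_indicator measurableSet_Ioi]
    congr with r
    simp [indicator_apply, polarShiftedQuadrant, hθ.1, hθ.2, div_lt_iff₀ hcos]
  · have hnot (r : ℝ) : (r, θ) ∉ polarShiftedQuadrant x := fun h => hθ h.1
    simp [indicator_of_notMem (hnot _), hθ]

lemma integral_Ioo_cos_eq_integral_Ioc_sin {E : Type*} [NormedAddCommGroup E] [NormedSpace ℝ E]
    (F : ℝ → E) : ∫ θ in Ioo 0 (π / 2), F (cos θ) = ∫ φ in Ioc 0 (π / 2), F (sin φ) := by
  rw [← integral_Ioc_eq_integral_Ioo, ← intervalIntegral.integral_of_le pi_div_two_pos.le,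
    ← intervalIntegral.integral_of_le pi_div_two_pos.le]
  simpa [cos_pi_div_two_sub] using
    (intervalIntegral.integral_comp_sub_left (fun θ => F (cos θ)) (π / 2) (a := 0) (b := π / 2)).symm

lemma integral_Ioi_exp_neg_sq_div_two_mul_sqrt {x : ℝ} (hx : 0 ≤ x) :
    (∫ u in Ioi x, exp (-u ^ 2 / 2)) * √(π / 2) =
      ∫ θ in Ioo 0 (π / 2), exp (-x ^ 2 / (2 * cos θ ^ 2)) :=
  calc (∫ u in Ioi x, exp (-u ^ 2 / 2)) * √(π / 2)
    _ = ∫ z in Ioi x ×ˢ Ioi 0, exp (-z.1 ^ 2 / 2) * exp (-z.2 ^ 2 / 2) := by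
      rw [← integral_Ioi_zero_exp_neg_sq_div_two, Measure.volume_eq_prod, ← setIntegral_prod_mul]
    _ = ∫ p in polarShiftedQuadrant x, p.1 * exp (-p.1 ^ 2 / 2) := by
      rw [setIntegral_Ioi_prod_Ioi_eq_polarShiftedQuadrant hx]
      congr with p
      rw [polarCoord_symm_apply, smul_eq_mul, ← exp_add]
      congr 2
      linear_combination (-p.1 ^ 2 / 2) * sin_sq_add_cos_sq p.2
    _ = ∫ θ in Ioo 0 (π / 2), ∫ r in Ioi (x / cos θ), r * exp (-r ^ 2 / 2) :=
      setIntegral_polarShiftedQuadrant integrable_mul_exp_neg_sq_div_two x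
    _ = ∫ θ in Ioo 0 (π / 2), exp (-x ^ 2 / (2 * cos θ ^ 2)) := by
      simp_rw [integral_Ioi_mul_exp_neg_sq_div_two]
      ring_nf

theorem craig_formula (x : ℝ) (hx : 0 ≤ x) :
    gaussQ x = (1 / Real.pi) * ∫ φ in Ioc (0:ℝ) (Real.pi / 2),
      Real.exp (-x ^ 2 / (2 * Real.sin φ ^ 2)) := by
  have hπ : √(2 * π) * √(π / 2) = π := by
    rw [← sqrt_mul (by positivity), show 2 * π * (π / 2) = π ^ 2 by ring, sqrt_sq pi_pos.le]
  rw [← integral_Ioo_cos_eq_integral_Ioc_sin fun c => exp (-x ^ 2 / (2 * c ^ 2)),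
    ← integral_Ioi_exp_neg_sq_div_two_mul_sqrt hx, gaussQ]
  generalize ∫ u in Ioi x, exp (-u ^ 2 / 2) = I
  field_simp
  linear_combination -I * hπ
end

section
/- The CDF of a sum dominates at the origin with the product order: if γ₁, …, γ_L are independent nonnegative random variables where γ_ℓ has a density f_ℓ that satisfies f_ℓ(x) ~ c_ℓ x^{m_ℓ − 1} as x → 0⁺ (with c_ℓ > 0, m_ℓ > 0), then P(γ₁ + ⋯ + γ_L ≤ x) ~ (∏_ℓ c_ℓ Γ(m_ℓ)) · x^{Σ m_ℓ} / Γ(1 + Σ_ℓ m_ℓ) as x → 0⁺. -/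
/-!
Let `P(κ, m)` be the measure with density `κ t^(m-1) / Γ(m)` on `(0, ∞)`. Its distribution
function is `κ x^m / Γ(m + 1)`, and by the Beta integral
`P(κ₁, m₁) ∗ P(κ₂, m₂) = P(κ₁ κ₂, m₁ + m₂)`.
The density hypothesis gives that the distribution function of `γ_ℓ` lies between `1 / a` and `a`
times that of `P(c_ℓ Γ(m_ℓ), m_ℓ)` on some half-line `(-∞, δ)`, for every `a > 1`. For measures
on `[0, ∞)`, `(ν ∗ ρ)(-∞, x] = ∫ ν(-∞, x - t] dρ(t)` only involves `ν` on `(-∞, x]`, so such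
comparisons pass to convolutions, one factor at a time by commutativity; and by independence the
law of the sum is the convolution of the laws.
-/

open MeasureTheory Real Set Filter ProbabilityTheory Topology
open scoped ENNReal NNReal

theorem tendsto_div_nhds_one_iff_forall_le_mul {α : Type*} {l : Filter α} {u v : α → ℝ}
    (hv : ∀ᶠ x in l, 0 < v x) :
    Tendsto (fun x => u x / v x) l (𝓝 1) ↔
      ∀ a > 1, ∀ᶠ x in l, u x ≤ a * v x ∧ v x ≤ a * u x := by
  constructor
  · intro h a ha
    filter_upwards [hv, h (Ioo_mem_nhds (inv_lt_one_of_one_lt₀ ha) ha)] with x hvx ⟨hlo, hhi⟩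
    rw [lt_div_iff₀ hvx, inv_mul_lt_iff₀ (by linarith)] at hlo
    exact ⟨((div_lt_iff₀ hvx).1 hhi).le, hlo.le⟩
  · intro h
    refine Metric.nhds_basis_closedBall.tendsto_right_iff.2 fun ε hε => ?_
    filter_upwards [hv, h (1 + ε) (by linarith)] with x hvx ⟨hup, hlow⟩
    rw [Metric.mem_closedBall, Real.dist_eq, abs_le]
    have hup' : u x / v x ≤ 1 + ε := (div_le_iff₀ hvx).2 hup
    have hlow' : 1 - ε ≤ u x / v x := by
      rw [le_div_iff₀ hvx]
      nlinarith
    constructor <;> linarith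

theorem integral_rpow_mul_sub_rpow {a b x : ℝ} (ha : 0 < a) (hb : 0 < b) (hx : 0 < x) :
    ∫ t in 0..x, t ^ (a - 1) * (x - t) ^ (b - 1) =
      Gamma a * Gamma b / Gamma (a + b) * x ^ (a + b - 1) := by
  have h := Complex.betaIntegral_scaled a b hx
  rw [Complex.betaIntegral_eq_Gamma_mul_div _ _ (by simpa) (by simpa)] at h
  apply Complex.ofReal_injective
  rw [← intervalIntegral.integral_ofReal]
  convert h using 1
  · refine intervalIntegral.integral_congr fun t ht => ?_
    rw [uIcc_of_le hx.le] at ht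
    push_cast
    rw [Complex.ofReal_cpow ht.1, Complex.ofReal_cpow (sub_nonneg.2 ht.2)]
    push_cast
    ring_nf
  · rw [← Complex.ofReal_add, Complex.Gamma_ofReal, Complex.Gamma_ofReal, Complex.Gamma_ofReal,
      ← Complex.ofReal_one, ← Complex.ofReal_sub, ← Complex.ofReal_cpow hx.le]
    push_cast
    ring

theorem MeasureTheory.Measure.ext_of_Iic_of_ne_top {μ ν : Measure ℝ} (hμ : ∀ x, μ (Iic x) ≠ ∞)
    (h : ∀ x, μ (Iic x) = ν (Iic x)) : μ = ν := by
  refine Measure.ext_of_Ioc' μ ν (fun a b _ => ne_top_of_le_ne_top (hμ b)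
    (measure_mono Ioc_subset_Iic_self)) fun a b hab => ?_
  rw [← Iic_sdiff_Iic, measure_sdiff (Iic_subset_Iic.2 hab.le) nullMeasurableSet_Iic (hμ a),
    measure_sdiff (Iic_subset_Iic.2 hab.le) nullMeasurableSet_Iic (h a ▸ hμ a), h, h]

theorem MeasureTheory.Measure.map_Iio_zero_of_nonneg {Ω : Type*} [MeasurableSpace Ω]
    (μ : Measure Ω) {Y : Ω → ℝ} (hY : Measurable Y) (h : ∀ ω, 0 ≤ Y ω) :
    μ.map Y (Iio 0) = 0 := by
  rw [Measure.map_apply hY measurableSet_Iio]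
  convert measure_empty (μ := μ)
  exact eq_empty_of_forall_notMem fun ω hω => (h ω).not_gt hω

theorem MeasureTheory.Measure.conv_Iic (ν ρ : Measure ℝ) [SFinite ν] [SFinite ρ] (x : ℝ) :
    (ν ∗ ρ) (Iic x) = ∫⁻ t, ν (Iic (x - t)) ∂ρ := by
  rw [Measure.conv, Measure.map_apply measurable_add measurableSet_Iic,
    Measure.prod_apply_symm (measurable_add measurableSet_Iic)]
  congr with t
  congr with s
  simp [le_sub_iff_add_le]

theorem MeasureTheory.Measure.conv_Iic_le_mul {ν ν' ρ : Measure ℝ} [SFinite ν] [SFinite ν']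
    [SFinite ρ] {a : ℝ≥0} {δ x : ℝ} (hρ : ρ (Iio 0) = 0) (h : ∀ y < δ, ν (Iic y) ≤ a * ν' (Iic y))
    (hx : x < δ) : (ν ∗ ρ) (Iic x) ≤ a * (ν' ∗ ρ) (Iic x) := by
  rw [Measure.conv_Iic, Measure.conv_Iic, ← lintegral_const_mul' _ _ ENNReal.coe_ne_top]
  refine lintegral_mono_ae ?_
  filter_upwards [measure_eq_zero_iff_ae_notMem.1 hρ] with t ht
  exact h _ (by simp only [mem_Iio, not_lt] at ht; linarith)

def CdfAsympLE (ν ν' : Measure ℝ) : Prop :=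
  ∀ a : ℝ≥0, 1 < a → ∃ δ > 0, ∀ y < δ, ν (Iic y) ≤ a * ν' (Iic y)

theorem CdfAsympLE.conv {ν ν' ρ ρ' : Measure ℝ} [SFinite ν] [SFinite ν'] [SFinite ρ] [SFinite ρ']
    (hν : CdfAsympLE ν ν') (hρ : CdfAsympLE ρ ρ') (hρ₀ : ρ (Iio 0) = 0) (hν'₀ : ν' (Iio 0) = 0) :
    CdfAsympLE (ν ∗ ρ) (ν' ∗ ρ') := by
  intro a ha
  have hb : 1 < NNReal.sqrt a := by simpa using NNReal.sqrt_lt_sqrt.2 ha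
  obtain ⟨δ₁, hδ₁, h₁⟩ := hν _ hb
  obtain ⟨δ₂, hδ₂, h₂⟩ := hρ _ hb
  refine ⟨min δ₁ δ₂, lt_min hδ₁ hδ₂, fun y hy => ?_⟩
  calc (ν ∗ ρ) (Iic y)
      ≤ NNReal.sqrt a * (ρ ∗ ν') (Iic y) := by
        rw [Measure.conv_comm ρ]
        exact Measure.conv_Iic_le_mul hρ₀ h₁ (hy.trans_le (min_le_left _ _))
    _ ≤ NNReal.sqrt a * (NNReal.sqrt a * (ρ' ∗ ν') (Iic y)) := by
        gcongr
        exact Measure.conv_Iic_le_mul hν'₀ h₂ (hy.trans_le (min_le_right _ _))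
    _ = a * (ν' ∗ ρ') (Iic y) := by
        rw [Measure.conv_comm ρ', ← mul_assoc, ← ENNReal.coe_mul, NNReal.mul_self_sqrt]

theorem cdfAsympLE_withDensity {g h : ℝ → ℝ≥0∞} (hg : volume.withDensity g (Iio 0) = 0)
    (hgh : ∀ a : ℝ≥0, 1 < a → ∀ᶠ t in 𝓝[>] 0, g t ≤ a * h t) :
    CdfAsympLE (volume.withDensity g) (volume.withDensity h) := by
  intro a ha
  obtain ⟨δ, hδ, hgh⟩ := (nhdsGT_basis (0 : ℝ)).eventually_iff.1 (hgh a ha)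
  refine ⟨δ, hδ, fun y hy => ?_⟩
  calc volume.withDensity g (Iic y)
      ≤ volume.withDensity g (Iio 0) + volume.withDensity g (Icc 0 y) := by
        refine (measure_mono fun t ht => ?_).trans (measure_union_le _ _)
        rcases lt_or_ge t 0 with h | h
        exacts [Or.inl h, Or.inr ⟨h, ht⟩]
    _ = ∫⁻ t in Ioc 0 y, g t := by
        rw [hg, zero_add, withDensity_apply _ measurableSet_Icc, setLIntegral_congr Ioc_ae_eq_Icc]
    _ ≤ ∫⁻ t in Ioc 0 y, a * h t :=
        setLIntegral_mono' measurableSet_Ioc fun t ht => hgh ⟨ht.1, ht.2.trans_lt hy⟩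
    _ ≤ a * volume.withDensity h (Iic y) := by
        rw [lintegral_const_mul' _ _ ENNReal.coe_ne_top, withDensity_apply _ measurableSet_Iic]
        gcongr
        exact Ioc_subset_Iic_self

theorem tendsto_toReal_div_of_cdfAsympLE {ν ν' : Measure ℝ} (h : CdfAsympLE ν ν')
    (h' : CdfAsympLE ν' ν) (hν' : ∀ x > 0, ν' (Iic x) ≠ 0 ∧ ν' (Iic x) ≠ ∞) :
    Tendsto (fun x => (ν (Iic x)).toReal / (ν' (Iic x)).toReal) (𝓝[>] 0) (𝓝 1) := by
  refine (tendsto_div_nhds_one_iff_forall_le_mul ?_).2 fun a ha => ?_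
  · filter_upwards [self_mem_nhdsWithin] with x hx
    exact ENNReal.toReal_pos (hν' x hx).1 (hν' x hx).2
  lift a to ℝ≥0 using by linarith
  obtain ⟨δ, hδ, hle⟩ := h a (by exact_mod_cast ha)
  obtain ⟨δ', hδ', hle'⟩ := h' a (by exact_mod_cast ha)
  filter_upwards [self_mem_nhdsWithin, Ioo_mem_nhdsGT (lt_min hδ hδ')] with x hx hxδ
  have hν_le := hle x (hxδ.2.trans_le (min_le_left _ _))
  have hν'_fin : (a : ℝ≥0∞) * ν' (Iic x) ≠ ∞ :=
    ENNReal.mul_ne_top ENNReal.coe_ne_top (hν' x hx).2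
  have hν_fin : (a : ℝ≥0∞) * ν (Iic x) ≠ ∞ :=
    ENNReal.mul_ne_top ENNReal.coe_ne_top (ne_top_of_le_ne_top hν'_fin hν_le)
  constructor
  · simpa using ENNReal.toReal_mono hν'_fin hν_le
  · simpa using ENNReal.toReal_mono hν_fin (hle' x (hxδ.2.trans_le (min_le_right _ _)))

noncomputable def powerMeasure (κ m : ℝ) : Measure ℝ :=
  volume.withDensity ((Ioi 0).indicator fun t => ENNReal.ofReal (κ / Gamma m * t ^ (m - 1)))

instance (κ m : ℝ) : SFinite (powerMeasure κ m) := by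
  unfold powerMeasure
  infer_instance

theorem powerMeasure_Iic_zero (κ m : ℝ) : powerMeasure κ m (Iic 0) = 0 := by
  rw [powerMeasure, withDensity_apply _ measurableSet_Iic, setLIntegral_indicator measurableSet_Ioi,
    Ioi_inter_Iic, Ioc_self, Measure.restrict_empty, lintegral_zero_measure]

theorem powerMeasure_Iio_zero (κ m : ℝ) : powerMeasure κ m (Iio 0) = 0 :=
  measure_mono_null Iio_subset_Iic_self (powerMeasure_Iic_zero κ m)

theorem powerMeasure_Iic {κ m x : ℝ} (hκ : 0 ≤ κ) (hm : 0 < m) (hx : 0 ≤ x) :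
    powerMeasure κ m (Iic x) = ENNReal.ofReal (κ * x ^ m / Gamma (m + 1)) := by
  have hint : IntervalIntegrable (fun t => κ / Gamma m * t ^ (m - 1)) volume 0 x :=
    (intervalIntegral.intervalIntegrable_rpow' (by linarith)).const_mul _
  rw [powerMeasure, withDensity_apply _ measurableSet_Iic, setLIntegral_indicator measurableSet_Ioi,
    Ioi_inter_Iic, ← ofReal_integral_eq_lintegral_ofReal
      ((intervalIntegrable_iff_integrableOn_Ioc_of_le hx).1 hint),
    ← intervalIntegral.integral_of_le hx, intervalIntegral.integral_const_mul,
    integral_rpow (Or.inl (by linarith)), sub_add_cancel, zero_rpow hm.ne', Gamma_add_one hm.ne']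
  · congr 1
    field_simp
    ring
  · filter_upwards [ae_restrict_mem measurableSet_Ioc] with t ht
    have := Gamma_pos_of_pos hm
    have := rpow_nonneg ht.1.le (m - 1)
    positivity

theorem powerMeasure_Iic_ne_top {κ m : ℝ} (hκ : 0 ≤ κ) (hm : 0 < m) (x : ℝ) :
    powerMeasure κ m (Iic x) ≠ ∞ :=
  ne_top_of_le_ne_top (powerMeasure_Iic hκ hm (le_max_right x 0) ▸ ENNReal.ofReal_ne_top)
    (measure_mono (Iic_subset_Iic.2 (le_max_left x 0)))

theorem powerMeasure_conv_Iic {κ₁ κ₂ m₁ m₂ : ℝ} (hκ₁ : 0 ≤ κ₁) (hm₁ : 0 < m₁) (x : ℝ) :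
    (powerMeasure κ₁ m₁ ∗ powerMeasure κ₂ m₂) (Iic x) =
      ∫⁻ t in Ioo 0 x, ENNReal.ofReal (κ₂ / Gamma m₂ * t ^ (m₂ - 1)) *
        ENNReal.ofReal (κ₁ * (x - t) ^ m₁ / Gamma (m₁ + 1)) := by
  have hanti : Antitone fun t => powerMeasure κ₁ m₁ (Iic (x - t)) :=
    fun s t hst => measure_mono (Iic_subset_Iic.2 (by linarith))
  rw [Measure.conv_Iic, powerMeasure.eq_1 κ₂ m₂, lintegral_withDensity_eq_lintegral_mul _
    ((Measurable.ennreal_ofReal (by fun_prop)).indicator measurableSet_Ioi) hanti.measurable,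
    ← lintegral_indicator measurableSet_Ioo]
  congr with t
  simp only [Pi.mul_apply, indicator_apply, mem_Ioi, mem_Ioo]
  by_cases ht₀ : 0 < t
  · by_cases htx : t < x
    · rw [if_pos ht₀, if_pos ⟨ht₀, htx⟩, powerMeasure_Iic hκ₁ hm₁ (by linarith)]
    · rw [if_neg (show ¬(0 < t ∧ t < x) by tauto),
        measure_mono_null (Iic_subset_Iic.2 (by linarith)) (powerMeasure_Iic_zero κ₁ m₁), mul_zero]
  · rw [if_neg ht₀, if_neg (by tauto), zero_mul]

theorem powerMeasure_conv {κ₁ κ₂ m₁ m₂ : ℝ} (hκ₁ : 0 ≤ κ₁) (hκ₂ : 0 ≤ κ₂) (hm₁ : 0 < m₁)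
    (hm₂ : 0 < m₂) :
    powerMeasure κ₁ m₁ ∗ powerMeasure κ₂ m₂ = powerMeasure (κ₁ * κ₂) (m₁ + m₂) := by
  refine (Measure.ext_of_Iic_of_ne_top
    (powerMeasure_Iic_ne_top (by positivity) (by linarith)) fun x => ?_).symm
  rw [powerMeasure_conv_Iic hκ₁ hm₁]
  rcases le_or_gt x 0 with hx | hx
  · rw [Ioo_eq_empty hx.not_gt, Measure.restrict_empty, lintegral_zero_measure,
      measure_mono_null (Iic_subset_Iic.2 hx) (powerMeasure_Iic_zero _ _)]
  have hint : IntervalIntegrable (fun t => t ^ (m₂ - 1) * (x - t) ^ (m₁ + 1 - 1)) volume 0 x :=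
    (intervalIntegral.intervalIntegrable_rpow' (by linarith)).mul_continuousOn
      ((continuous_const.sub continuous_id).rpow_const fun _ => Or.inr (by linarith)).continuousOn
  have hΓ₁ := Gamma_pos_of_pos hm₁
  have hΓ₂ := Gamma_pos_of_pos hm₂
  have hprod : ∀ t ∈ Ioc 0 x, ENNReal.ofReal (κ₂ / Gamma m₂ * t ^ (m₂ - 1)) *
      ENNReal.ofReal (κ₁ * (x - t) ^ m₁ / Gamma (m₁ + 1)) = ENNReal.ofReal
        (κ₁ * κ₂ / (Gamma m₂ * Gamma (m₁ + 1)) * (t ^ (m₂ - 1) * (x - t) ^ (m₁ + 1 - 1))) := by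
    intro t ht
    have := rpow_nonneg ht.1.le (m₂ - 1)
    rw [← ENNReal.ofReal_mul (by positivity), add_sub_cancel_right]
    ring_nf
  rw [setLIntegral_congr Ioo_ae_eq_Ioc, setLIntegral_congr_fun measurableSet_Ioc hprod,
    ← ofReal_integral_eq_lintegral_ofReal
      ((intervalIntegrable_iff_integrableOn_Ioc_of_le hx.le).1 (hint.const_mul _)),
    ← intervalIntegral.integral_of_le hx.le, intervalIntegral.integral_const_mul,
    integral_rpow_mul_sub_rpow hm₂ (by linarith) hx,
    powerMeasure_Iic (by positivity) (by linarith) hx.le, Gamma_add_one hm₁.ne']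
  · congr 1
    rw [show m₂ + (m₁ + 1) = m₁ + m₂ + 1 by ring, show m₁ + m₂ + 1 - 1 = m₁ + m₂ by ring]
    field_simp
  · filter_upwards [ae_restrict_mem measurableSet_Ioc] with t ht
    have := rpow_nonneg ht.1.le (m₂ - 1)
    have := rpow_nonneg (sub_nonneg.2 ht.2) (m₁ + 1 - 1)
    positivity

theorem cdfAsympLE_powerMeasure_of_density {ν : Measure ℝ} {f : ℝ → ℝ} {c m : ℝ} (hc : 0 < c)
    (hm : 0 < m) (hν : ν = volume.withDensity fun x => ENNReal.ofReal (f x)) (hν₀ : ν (Iio 0) = 0)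
    (hf : Tendsto (fun x => f x / (c * x ^ (m - 1))) (𝓝[>] 0) (𝓝 1)) :
    CdfAsympLE ν (powerMeasure (c * Gamma m) m) ∧ CdfAsympLE (powerMeasure (c * Gamma m) m) ν := by
  have hbounds := (tendsto_div_nhds_one_iff_forall_le_mul (eventually_mem_nhdsWithin.mono
    fun x (hx : 0 < x) => by positivity)).1 hf
  have hdensity : ∀ᶠ t in 𝓝[>] (0 : ℝ), (Ioi 0).indicator
      (fun t => ENNReal.ofReal (c * Gamma m / Gamma m * t ^ (m - 1))) t =
        ENNReal.ofReal (c * t ^ (m - 1)) := by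
    filter_upwards [self_mem_nhdsWithin] with t ht
    rw [indicator_of_mem ht, mul_div_cancel_right₀ _ (Gamma_pos_of_pos hm).ne']
  subst hν
  constructor
  · refine cdfAsympLE_withDensity hν₀ fun a ha => ?_
    filter_upwards [hbounds a (by exact_mod_cast ha), hdensity] with t ht hdt
    rw [hdt, ← ENNReal.ofReal_coe_nnreal, ← ENNReal.ofReal_mul a.coe_nonneg]
    exact ENNReal.ofReal_le_ofReal ht.1
  · refine cdfAsympLE_withDensity (powerMeasure_Iio_zero _ _) fun a ha => ?_
    filter_upwards [hbounds a (by exact_mod_cast ha), hdensity] with t ht hdt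
    rw [hdt, ← ENNReal.ofReal_coe_nnreal, ← ENNReal.ofReal_mul a.coe_nonneg]
    exact ENNReal.ofReal_le_ofReal ht.2

theorem cdfAsympLE_map_sum {Ω ι : Type*} [MeasurableSpace Ω] {μ : Measure Ω} [IsFiniteMeasure μ]
    {X : ι → Ω → ℝ} (hX : ∀ i, Measurable (X i)) (hind : iIndepFun X μ)
    (hX₀ : ∀ i ω, 0 ≤ X i ω) {κ m : ι → ℝ} (hκ : ∀ i, 0 ≤ κ i) (hm : ∀ i, 0 < m i)
    (hlaw : ∀ i, CdfAsympLE (μ.map (X i)) (powerMeasure (κ i) (m i)) ∧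
      CdfAsympLE (powerMeasure (κ i) (m i)) (μ.map (X i)))
    {s : Finset ι} (hs : s.Nonempty) :
    CdfAsympLE (μ.map (∑ i ∈ s, X i)) (powerMeasure (∏ i ∈ s, κ i) (∑ i ∈ s, m i)) ∧
      CdfAsympLE (powerMeasure (∏ i ∈ s, κ i) (∑ i ∈ s, m i)) (μ.map (∑ i ∈ s, X i)) := by
  induction hs using Finset.Nonempty.cons_induction with
  | singleton i => simpa using hlaw i
  | cons i t hi ht ih =>
    have hXt : Measurable (∑ j ∈ t, X j) := by fun_prop
    have hXt₀ : μ.map (∑ j ∈ t, X j) (Iio 0) = 0 :=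
      μ.map_Iio_zero_of_nonneg hXt fun ω => by
        simpa using Finset.sum_nonneg fun j _ => hX₀ j ω
    rw [Finset.sum_cons, Finset.prod_cons, Finset.sum_cons,
      (hind.indepFun_finsetSum_of_notMem hX hi).symm.map_add_eq_map_conv_map (hX i) hXt,
      ← powerMeasure_conv (hκ i) (Finset.prod_nonneg fun j _ => hκ j) (hm i)
        (Finset.sum_pos (fun j _ => hm j) ht)]
    exact ⟨(hlaw i).1.conv ih.1 hXt₀ (powerMeasure_Iio_zero _ _),
      (hlaw i).2.conv ih.2 (powerMeasure_Iio_zero _ _) (μ.map_Iio_zero_of_nonneg (hX i) (hX₀ i))⟩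

theorem sum_cdf_asymptotics_at_origin {Ω : Type*} [MeasurableSpace Ω] (μ : Measure Ω)
    [IsProbabilityMeasure μ] (L : ℕ) (hL : 0 < L) (γ : Fin L → Ω → ℝ)
    (f : Fin L → ℝ → ℝ) (c m : Fin L → ℝ)
    (hmeas : ∀ ℓ, Measurable (γ ℓ))
    (hindep : iIndepFun γ μ)
    (hnonneg : ∀ ℓ ω, 0 ≤ γ ℓ ω)
    (hc : ∀ ℓ, 0 < c ℓ) (hm : ∀ ℓ, 0 < m ℓ)
    (hdensity : ∀ ℓ, Measure.map (γ ℓ) μ =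
      MeasureTheory.volume.withDensity (fun x => ENNReal.ofReal (f ℓ x)))
    (hasymp : ∀ ℓ, Tendsto (fun x : ℝ => f ℓ x / (c ℓ * x ^ (m ℓ - 1)))
      (nhdsWithin 0 (Ioi 0)) (nhds 1)) :
    Tendsto
      (fun x : ℝ => (μ {ω | ∑ ℓ, γ ℓ ω ≤ x}).toReal /
        ((∏ ℓ, c ℓ * Real.Gamma (m ℓ)) * x ^ (∑ ℓ, m ℓ) / Real.Gamma (1 + ∑ ℓ, m ℓ)))
      (nhdsWithin 0 (Ioi 0)) (nhds 1) := by
  have hne : (Finset.univ : Finset (Fin L)).Nonempty := Finset.univ_nonempty_iff.2 ⟨⟨0, hL⟩⟩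
  have hκ : ∀ ℓ, 0 < c ℓ * Gamma (m ℓ) := fun ℓ => mul_pos (hc ℓ) (Gamma_pos_of_pos (hm ℓ))
  have hK : 0 < ∏ ℓ, c ℓ * Gamma (m ℓ) := Finset.prod_pos fun ℓ _ => hκ ℓ
  have hM : 0 < ∑ ℓ, m ℓ := Finset.sum_pos (fun ℓ _ => hm ℓ) hne
  have hΓ : 0 < Gamma (∑ ℓ, m ℓ + 1) := Gamma_pos_of_pos (by linarith)
  have hsum := cdfAsympLE_map_sum hmeas hindep hnonneg (fun ℓ => (hκ ℓ).le) hm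
    (fun ℓ => cdfAsympLE_powerMeasure_of_density (hc ℓ) (hm ℓ) (hdensity ℓ)
      (μ.map_Iio_zero_of_nonneg (hmeas ℓ) (hnonneg ℓ)) (hasymp ℓ)) hne
  refine (tendsto_toReal_div_of_cdfAsympLE hsum.1 hsum.2 fun x (hx : 0 < x) => ?_).congr' ?_
  · rw [powerMeasure_Iic hK.le hM hx.le]
    exact ⟨ENNReal.ofReal_ne_zero_iff.2 (by positivity), ENNReal.ofReal_ne_top⟩
  · filter_upwards [self_mem_nhdsWithin] with x (hx : 0 < x)
    rw [powerMeasure_Iic hK.le hM hx.le, ENNReal.toReal_ofReal (by positivity), add_comm,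
      Measure.map_apply (by fun_prop) measurableSet_Iic]
    simp only [preimage, mem_Iic, Finset.sum_apply, mul_div_right_comm]
end
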